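/- arXiv:2310.03935 — 2 statements merged into one kernel-verified Lean document; each statement's English description precedes it below -/
import Mathlib

section
/- Let A : 𝔪 → 𝔪 be a metric operator and define ⟨U,V⟩ := (AU, V) for U, V ∈ 𝔪. Then for a vector X ∈ 𝔤 the following are equivalent: (a) ⟨[X,Y]_𝔪, X_𝔪⟩ = 0 for all Y ∈ 𝔪; (b) [X, A X_𝔪]_𝔪 = 0. (Here X_𝔪 is the (·,·)-orthogonal projection of X onto 𝔪 and [·]_𝔪 denotes the (·,·)-orthogonal projection of an element of 𝔤 onto 𝔪.) -/
open scoped InnerProductSpace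

/-!
Put `W := A X_𝔪`. Self-adjointness of `A`, then `ad`-invariance of `(·,·)` give, for `Y ∈ 𝔪`,
`⟨[X,Y]_𝔪, X_𝔪⟩ = ([X,Y]_𝔪, W) = ([X,Y], W) = -(Y, [X,W]) = -(Y, [X,W]_𝔪)`.
So (a) says that `[X,W]_𝔪 ∈ 𝔪` is orthogonal to all of `𝔪`, i.e. (b).
-/

section Compression

variable {𝔤 : Type*} [NormedAddCommGroup 𝔤] [InnerProductSpace ℝ 𝔤] [Bracket 𝔤 𝔤]
  (K : Submodule ℝ 𝔤) [K.HasOrthogonalProjection]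

theorem inner_orthogonalProjectionOnto_bracket_eq_neg
    (hinv : ∀ Z U V : 𝔤, ⟪⁅Z, U⁆, V⟫_ℝ + ⟪U, ⁅Z, V⁆⟫_ℝ = 0) (X : 𝔤) (Y W : K) :
    ⟪K.orthogonalProjectionOnto ⁅X, (Y : 𝔤)⁆, W⟫_ℝ
      = -⟪Y, K.orthogonalProjectionOnto ⁅X, (W : 𝔤)⁆⟫_ℝ := by
  rw [Submodule.inner_orthogonalProjectionOnto_eq_of_mem_right,
    Submodule.inner_orthogonalProjectionOnto_eq_of_mem_left]
  exact eq_neg_of_add_eq_zero_left (hinv X Y W)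

theorem inner_symm_orthogonalProjectionOnto_bracket
    (hinv : ∀ Z U V : 𝔤, ⟪⁅Z, U⁆, V⟫_ℝ + ⟪U, ⁅Z, V⁆⟫_ℝ = 0)
    {A : K →ₗ[ℝ] K} (hA : A.IsSymmetric) (X : 𝔤) (Y : K) :
    ⟪A (K.orthogonalProjectionOnto ⁅X, (Y : 𝔤)⁆), K.orthogonalProjectionOnto X⟫_ℝ
      = -⟪Y, K.orthogonalProjectionOnto ⁅X, (A (K.orthogonalProjectionOnto X) : 𝔤)⁆⟫_ℝ := by
  rw [hA, inner_orthogonalProjectionOnto_bracket_eq_neg K hinv]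

end Compression

set_option linter.overlappingInstances false in
/-- `𝔤` carries two a priori unrelated additive structures, from `NormedAddCommGroup` and from
`LieRing`, and a bare `0 : 𝔤` is the Lie ring's zero; `ad`-invariance forces it to have norm zero. -/
theorem norm_lie_zero_eq_zero {𝔤 : Type*} [NormedAddCommGroup 𝔤] [InnerProductSpace ℝ 𝔤]
    [LieRing 𝔤] (hinv : ∀ Z U V : 𝔤, ⟪⁅Z, U⁆, V⟫_ℝ + ⟪U, ⁅Z, V⁆⟫_ℝ = 0) : ‖(0 : 𝔤)‖ = 0 := by
  have h := hinv 0 0 0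
  rw [lie_self] at h
  rw [norm_eq_zero, ← inner_self_eq_zero (𝕜 := ℝ)]
  linarith

theorem forall_inner_eq_zero_iff {E : Type*} [NormedAddCommGroup E] [InnerProductSpace ℝ E]
    (v : E) : (∀ w : E, ⟪w, v⟫_ℝ = 0) ↔ v = 0 :=
  ⟨fun h => inner_self_eq_zero.mp (h v), fun h w => h ▸ inner_zero_right w⟩

theorem statement_11_general
    {𝔤 : Type*} [NormedAddCommGroup 𝔤] [InnerProductSpace ℝ 𝔤] [FiniteDimensional ℝ 𝔤]
    [LieRing 𝔤]
    (𝔥 : @Submodule ℝ 𝔤 _ (AddCommGroup.toAddCommMonoid (self := NormedAddCommGroup.toAddCommGroup))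
      (NormedSpace.toModule (self := InnerProductSpace.toNormedSpace)))
    -- `(·,·)` is `Ad(G)`-invariant, hence `ad`-invariant:
    (hinner_inv : ∀ Z U V : 𝔤, ⟪⁅Z, U⁆, V⟫_ℝ + ⟪U, ⁅Z, V⁆⟫_ℝ = 0)
    (A : ↥𝔥ᗮ →ₗ[ℝ] ↥𝔥ᗮ)
    (hA_sa : ∀ X Y : ↥𝔥ᗮ, ⟪(A X : 𝔤), (Y : 𝔤)⟫_ℝ = ⟪(X : 𝔤), (A Y : 𝔤)⟫_ℝ)
    (X : 𝔤) :
    (∀ Y : ↥𝔥ᗮ,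
        ⟪(A (Submodule.orthogonalProjectionOnto 𝔥ᗮ ⁅X, (Y : 𝔤)⁆) : 𝔤),
          ((Submodule.orthogonalProjectionOnto 𝔥ᗮ X : ↥𝔥ᗮ) : 𝔤)⟫_ℝ = 0)
      ↔ ((Submodule.orthogonalProjectionOnto 𝔥ᗮ
            ⁅X, ((A (Submodule.orthogonalProjectionOnto 𝔥ᗮ X) : ↥𝔥ᗮ) : 𝔤)⁆ : ↥𝔥ᗮ) : 𝔤) = 0 := by
  have hA : A.IsSymmetric := hA_sa
  simp only [← Submodule.coe_inner, inner_symm_orthogonalProjectionOnto_bracket 𝔥ᗮ hinner_inv hA,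
    neg_eq_zero, forall_inner_eq_zero_iff, norm_eq_zero.mp (norm_lie_zero_eq_zero hinner_inv),
    ZeroMemClass.coe_eq_zero]

/-- geodesic condition of Kowalski–Vanhecke, reformulated.
Setting: `𝔤` is the Lie algebra of a compact Lie group carrying an `Ad(G)`-invariant inner
product `(·,·)` (so each `Ad h` is a linear isometry and `([Z,U],V) + (U,[Z,V]) = 0`),
`𝔪 = 𝔥ᗮ`, and `A` is a metric operator on `𝔪` with associated invariant-metric inner product
`⟨U,V⟩ = (A U, V)`.  For `X ∈ 𝔤` the following are equivalent:
(a) `⟨[X,Y]_𝔪, X_𝔪⟩ = 0` for all `Y ∈ 𝔪`;  (b) `[X, A X_𝔪]_𝔪 = 0`. -/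
theorem statement_11
    {𝔤 : Type*} [NormedAddCommGroup 𝔤] [InnerProductSpace ℝ 𝔤] [FiniteDimensional ℝ 𝔤]
    [LieRing 𝔤] [LieAlgebra ℝ 𝔤]
    {H : Type*} [Group H] (Ad : H →* 𝔤 ≃ₗᵢ[ℝ] 𝔤)
    (𝔥 : @Submodule ℝ 𝔤 _ (AddCommGroup.toAddCommMonoid (self := NormedAddCommGroup.toAddCommGroup))
      (NormedSpace.toModule (self := InnerProductSpace.toNormedSpace)))
    (hm_inv : ∀ (h : H), ∀ x ∈ 𝔥ᗮ, Ad h x ∈ 𝔥ᗮ)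
    -- `(·,·)` is `Ad(G)`-invariant, hence `ad`-invariant:
    (hinner_inv : ∀ Z U V : 𝔤, ⟪⁅Z, U⁆, V⟫_ℝ + ⟪U, ⁅Z, V⁆⟫_ℝ = 0)
    (A : ↥𝔥ᗮ →ₗ[ℝ] ↥𝔥ᗮ)
    (hA_pos : ∀ X : ↥𝔥ᗮ, X ≠ 0 → 0 < ⟪(A X : 𝔤), (X : 𝔤)⟫_ℝ)
    (hA_sa : ∀ X Y : ↥𝔥ᗮ, ⟪(A X : 𝔤), (Y : 𝔤)⟫_ℝ = ⟪(X : 𝔤), (A Y : 𝔤)⟫_ℝ)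
    (hA_comm : ∀ (h : H) (X : ↥𝔥ᗮ) (hX : Ad h (X : 𝔤) ∈ 𝔥ᗮ),
      (A ⟨Ad h (X : 𝔤), hX⟩ : 𝔤) = Ad h (A X : 𝔤))
    (X : 𝔤) :
    (∀ Y : ↥𝔥ᗮ,
        ⟪(A (Submodule.orthogonalProjectionOnto 𝔥ᗮ ⁅X, (Y : 𝔤)⁆) : 𝔤),
          ((Submodule.orthogonalProjectionOnto 𝔥ᗮ X : ↥𝔥ᗮ) : 𝔤)⟫_ℝ = 0)
      ↔ ((Submodule.orthogonalProjectionOnto 𝔥ᗮ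
            ⁅X, ((A (Submodule.orthogonalProjectionOnto 𝔥ᗮ X) : ↥𝔥ᗮ) : 𝔤)⁆ : ↥𝔥ᗮ) : 𝔤) = 0 :=
  statement_11_general 𝔥 hinner_inv A hA_sa X
end

section
/- If X ∈ 𝔪 is an equigeodesic vector, i.e. [X, AX]_𝔪 = 0 for every metric operator A : 𝔪 → 𝔪, then [X, T_i^j(P_i(X)) + T_j^i(P_j(X))]_𝔪 = 0 for all i, j ∈ {1,…,s}. -/
open scoped InnerProductSpace

/-- The subrepresentations of `H` (acting through `Ad`) on the invariant subspaces `V` and `W`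
are equivalent: there is an intertwining linear isomorphism `V ≃ W`. -/
def ReprEquiv {𝔤 : Type*} [NormedAddCommGroup 𝔤] [InnerProductSpace ℝ 𝔤]
    {H : Type*} [Group H] (Ad : H →* 𝔤 ≃ₗᵢ[ℝ] 𝔤) (V W : Submodule ℝ 𝔤) : Prop :=
  ∃ e : ↥V ≃ₗ[ℝ] ↥W, ∀ (h : H) (x : 𝔤) (hx : x ∈ V) (hx' : Ad h x ∈ V),
    (e ⟨Ad h x, hx'⟩ : 𝔤) = Ad h (e ⟨x, hx⟩ : 𝔤)

attribute [local instance 10] LieRing.toAddCommGroup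

/-!
If `B` is a self-adjoint `Ad(H)`-equivariant operator on the finite-dimensional space `𝔪`, then
`id + ε B` is a metric operator for small `ε > 0`. Applying the equigeodesic property to `id` and to
`id + ε B`, and using that `ad X` is skew-adjoint (hence linear), gives `[X, B X]_𝔪 = 0`. For
`B = T_i^j P_i + T_j^i P_j` self-adjointness holds because `T_j^i` is the adjoint of `T_i^j`:
they are mutually inverse isometries when `𝔪_i ≅ 𝔪_j`, and both vanish otherwise.
-/

section Intertwining

variable {𝔤 : Type*} [NormedAddCommGroup 𝔤] [InnerProductSpace ℝ 𝔤]
  {H : Type*} [Group H] (Ad : H →* 𝔤 ≃ₗᵢ[ℝ] 𝔤)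

def Intertwines {V W : Submodule ℝ 𝔤} (f : V →ₗ[ℝ] W) : Prop :=
  ∀ (h : H) (x : V) (hx : Ad h (x : 𝔤) ∈ V), (f ⟨Ad h (x : 𝔤), hx⟩ : 𝔤) = Ad h (f x : 𝔤)

variable {Ad}

lemma Intertwines.of_inverse {V W : Submodule ℝ 𝔤} (hV : ∀ h : H, ∀ x ∈ V, Ad h x ∈ V)
    {f : V →ₗ[ℝ] W} {g : W →ₗ[ℝ] V} (hf : Intertwines Ad f)
    (hgf : ∀ x, g (f x) = x) (hfg : ∀ y, f (g y) = y) : Intertwines Ad g := by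
  intro h y hy
  have hx : Ad h (g y : 𝔤) ∈ V := hV h _ (g y).2
  have hfx : f ⟨Ad h (g y : 𝔤), hx⟩ = ⟨Ad h y, hy⟩ := Subtype.ext (by rw [hf, hfg])
  rw [← hfx, hgf]

lemma ReprEquiv.symm {V W : Submodule ℝ 𝔤} (hV : ∀ h : H, ∀ x ∈ V, Ad h x ∈ V)
    (hVW : ReprEquiv Ad V W) : ReprEquiv Ad W V := by
  obtain ⟨e, he⟩ := hVW
  have he' : Intertwines Ad e.toLinearMap := fun h x hx => he h x x.2 hx
  exact ⟨e.symm, fun h y hy hy' =>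
    he'.of_inverse hV e.symm_apply_apply e.apply_symm_apply h ⟨y, hy⟩ hy'⟩

lemma orthogonalProjectionOnto_apply_ad {K : Submodule ℝ 𝔤} [K.HasOrthogonalProjection]
    (hK : ∀ h : H, ∀ x ∈ K, Ad h x ∈ K) (h : H) (z : 𝔤) :
    (K.orthogonalProjectionOnto (Ad h z) : 𝔤) = Ad h (K.orthogonalProjectionOnto z) := by
  rw [← Submodule.starProjection_apply]
  refine Submodule.eq_starProjection_of_mem_of_inner_eq_zero (hK h _ (Submodule.coe_mem _))
    fun w hw => ?_
  rw [← map_sub, LinearIsometryEquiv.inner_map_eq_flip, ← LinearIsometryEquiv.coe_inv,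
    ← map_inv]
  exact K.starProjection_inner_eq_zero z _ (hK h⁻¹ w hw)

end Intertwining

section PairOperator

variable {𝔤 : Type*} [NormedAddCommGroup 𝔤] [InnerProductSpace ℝ 𝔤]
  {H : Type*} [Group H] {Ad : H →* 𝔤 ≃ₗᵢ[ℝ] 𝔤}
  {𝔪 mi mj : Submodule ℝ 𝔤} [mi.HasOrthogonalProjection] [mj.HasOrthogonalProjection]

noncomputable def pairOperator (hi : mi ≤ 𝔪) (hj : mj ≤ 𝔪) (S : mi →ₗ[ℝ] mj)
    (S' : mj →ₗ[ℝ] mi) : 𝔪 →ₗ[ℝ] 𝔪 :=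
  (Submodule.inclusion hj ∘ₗ S ∘ₗ (mi.orthogonalProjectionOnto : 𝔤 →ₗ[ℝ] mi) +
    Submodule.inclusion hi ∘ₗ S' ∘ₗ (mj.orthogonalProjectionOnto : 𝔤 →ₗ[ℝ] mj)) ∘ₗ 𝔪.subtype

variable (hi : mi ≤ 𝔪) (hj : mj ≤ 𝔪) {S : mi →ₗ[ℝ] mj} {S' : mj →ₗ[ℝ] mi}

lemma coe_pairOperator_apply (Z : 𝔪) :
    (pairOperator hi hj S S' Z : 𝔤) =
      (S (mi.orthogonalProjectionOnto (Z : 𝔤)) : 𝔤) +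
        (S' (mj.orthogonalProjectionOnto (Z : 𝔤)) : 𝔤) := rfl

lemma pairOperator_isSymmetric (hadj : ∀ x y, ⟪S x, y⟫_ℝ = ⟪x, S' y⟫_ℝ) :
    (pairOperator hi hj S S').IsSymmetric := by
  have hS : ∀ Z W : 𝔤, ⟪(S (mi.orthogonalProjectionOnto Z) : 𝔤), W⟫_ℝ =
      ⟪Z, (S' (mj.orthogonalProjectionOnto W) : 𝔤)⟫_ℝ := fun Z W => by
    rw [← Submodule.inner_orthogonalProjectionOnto_eq_of_mem_left, hadj,
      Submodule.inner_orthogonalProjectionOnto_eq_of_mem_right]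
  have hS' : ∀ Z W : 𝔤, ⟪(S' (mj.orthogonalProjectionOnto Z) : 𝔤), W⟫_ℝ =
      ⟪Z, (S (mi.orthogonalProjectionOnto W) : 𝔤)⟫_ℝ := fun Z W => by
    rw [real_inner_comm, ← hS, real_inner_comm]
  intro Z W
  simp only [Submodule.coe_inner, coe_pairOperator_apply, inner_add_left, inner_add_right, hS,
    hS', add_comm]

lemma pairOperator_intertwines (hi_inv : ∀ h : H, ∀ x ∈ mi, Ad h x ∈ mi)
    (hj_inv : ∀ h : H, ∀ x ∈ mj, Ad h x ∈ mj) (hS : Intertwines Ad S)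
    (hS' : Intertwines Ad S') : Intertwines Ad (pairOperator hi hj S S') := by
  intro h Z hZ
  have hPi : mi.orthogonalProjectionOnto (Ad h (Z : 𝔤)) =
      ⟨Ad h (mi.orthogonalProjectionOnto (Z : 𝔤)), hi_inv h _ (Submodule.coe_mem _)⟩ :=
    Subtype.ext (orthogonalProjectionOnto_apply_ad hi_inv h Z)
  have hPj : mj.orthogonalProjectionOnto (Ad h (Z : 𝔤)) =
      ⟨Ad h (mj.orthogonalProjectionOnto (Z : 𝔤)), hj_inv h _ (Submodule.coe_mem _)⟩ :=
    Subtype.ext (orthogonalProjectionOnto_apply_ad hj_inv h Z)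
  rw [coe_pairOperator_apply, coe_pairOperator_apply, map_add, hPi, hPj, hS, hS']

end PairOperator

lemma exists_pos_inner_add_smul_self {E : Type*} [NormedAddCommGroup E] [InnerProductSpace ℝ E]
    [FiniteDimensional ℝ E] (B : E →ₗ[ℝ] E) :
    ∃ ε : ℝ, 0 < ε ∧ ∀ z : E, z ≠ 0 → 0 < ⟪z + ε • B z, z⟫_ℝ := by
  set C := ‖LinearMap.toContinuousLinearMap B‖
  have hC : 0 ≤ C := norm_nonneg _
  refine ⟨(C + 1)⁻¹, by positivity, fun z hz => ?_⟩
  have hz : 0 < ‖z‖ := norm_pos_iff.mpr hz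
  have hBz : |⟪B z, z⟫_ℝ| ≤ C * ‖z‖ ^ 2 :=
    calc |⟪B z, z⟫_ℝ| ≤ ‖B z‖ * ‖z‖ := abs_real_inner_le_norm _ _
      _ ≤ C * ‖z‖ * ‖z‖ := by
        gcongr; exact (LinearMap.toContinuousLinearMap B).le_opNorm z
      _ = C * ‖z‖ ^ 2 := by ring
  rw [inner_add_left, real_inner_smul_left, real_inner_self_eq_norm_sq]
  have hε : (C + 1)⁻¹ * C < 1 := by
    rw [inv_mul_lt_one₀ (by positivity)]; linarith
  nlinarith [neg_abs_le ⟪B z, z⟫_ℝ, pow_pos hz 2, inv_pos.mpr (by linarith : 0 < C + 1)]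

section Equigeodesic

variable {𝔤 : Type*} [NormedAddCommGroup 𝔤] [InnerProductSpace ℝ 𝔤]
  {H : Type*} [Group H] (Ad : H →* 𝔤 ≃ₗᵢ[ℝ] 𝔤) (𝔪 : Submodule ℝ 𝔤)

def IsMetricOperator (A : 𝔪 →ₗ[ℝ] 𝔪) : Prop :=
  (∀ Z : 𝔪, Z ≠ 0 → 0 < ⟪A Z, Z⟫_ℝ) ∧ A.IsSymmetric ∧ Intertwines Ad A

def IsEquigeodesic [LieRing 𝔤] [𝔪.HasOrthogonalProjection] (X : 𝔪) : Prop :=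
  ∀ A : 𝔪 →ₗ[ℝ] 𝔪, IsMetricOperator Ad 𝔪 A →
    (𝔪.orthogonalProjectionOnto ⁅(X : 𝔤), (A X : 𝔤)⁆ : 𝔤) = 0

variable {Ad 𝔪}

lemma isMetricOperator_id : IsMetricOperator Ad 𝔪 LinearMap.id :=
  ⟨fun _ hZ => real_inner_self_pos.mpr hZ, LinearMap.IsSymmetric.id, fun _ _ _ => rfl⟩

lemma exists_isMetricOperator_id_add_smul [FiniteDimensional ℝ 𝔪] {B : 𝔪 →ₗ[ℝ] 𝔪}
    (hB : B.IsSymmetric) (hBAd : Intertwines Ad B) :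
    ∃ ε : ℝ, ε ≠ 0 ∧ IsMetricOperator Ad 𝔪 (LinearMap.id + ε • B) := by
  obtain ⟨ε, hε, hpos⟩ := exists_pos_inner_add_smul_self B
  refine ⟨ε, hε.ne', hpos, LinearMap.IsSymmetric.id.add (hB.smul (conj_trivial ε)),
    fun h Z hZ => ?_⟩
  simp only [LinearMap.add_apply, LinearMap.id_apply, LinearMap.smul_apply, Submodule.coe_add,
    Submodule.coe_smul, map_add, map_smul, hBAd h Z hZ]

variable [LieRing 𝔤]

/- The bracket is additive only for the Lie ring's own additive structure, which is unrelated to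
the normed one; invariance of the inner product is what makes `⁅Z, ·⁆` linear for the latter. -/
lemma inner_lie_add_smul_left
    (hinner_inv : ∀ Z U V : 𝔤, ⟪⁅Z, U⁆, V⟫_ℝ + ⟪U, ⁅Z, V⁆⟫_ℝ = 0) (Z U W V : 𝔤) (c : ℝ) :
    ⟪⁅Z, U + c • W⁆, V⟫_ℝ = ⟪⁅Z, U⁆, V⟫_ℝ + c * ⟪⁅Z, W⁆, V⟫_ℝ := by
  have hsum := hinner_inv Z (U + c • W) V
  rw [inner_add_left, real_inner_smul_left] at hsum
  linear_combination hsum - hinner_inv Z U V - c * hinner_inv Z W V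

lemma IsEquigeodesic.orthogonalProjectionOnto_lie_eq_zero [FiniteDimensional ℝ 𝔪]
    (hinner_inv : ∀ Z U V : 𝔤, ⟪⁅Z, U⁆, V⟫_ℝ + ⟪U, ⁅Z, V⁆⟫_ℝ = 0) {X : 𝔪}
    (hX : IsEquigeodesic Ad 𝔪 X) {B : 𝔪 →ₗ[ℝ] 𝔪} (hB : B.IsSymmetric)
    (hBAd : Intertwines Ad B) :
    (𝔪.orthogonalProjectionOnto ⁅(X : 𝔤), (B X : 𝔤)⁆ : 𝔤) = 0 := by
  obtain ⟨ε, hε, hA⟩ := exists_isMetricOperator_id_add_smul hB hBAd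
  have hXX : ⁅(X : 𝔤), (X : 𝔤)⁆ ∈ 𝔪ᗮ := Submodule.orthogonalProjectionOnto_eq_zero_iff.mp
    (ZeroMemClass.coe_eq_zero.mp (hX _ isMetricOperator_id))
  have hXA : ⁅(X : 𝔤), (X : 𝔤) + ε • (B X : 𝔤)⁆ ∈ 𝔪ᗮ :=
    Submodule.orthogonalProjectionOnto_eq_zero_iff.mp (ZeroMemClass.coe_eq_zero.mp (hX _ hA))
  rw [ZeroMemClass.coe_eq_zero, Submodule.orthogonalProjectionOnto_eq_zero_iff,
    Submodule.mem_orthogonal']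
  intro V hV
  have hXAV := (Submodule.mem_orthogonal' _ _).mp hXA V hV
  rw [inner_lie_add_smul_left hinner_inv, (Submodule.mem_orthogonal' _ _).mp hXX V hV,
    zero_add] at hXAV
  exact (mul_eq_zero.mp hXAV).resolve_left hε

end Equigeodesic

theorem statement_12_general
    {𝔤 : Type*} [NormedAddCommGroup 𝔤] [InnerProductSpace ℝ 𝔤] [FiniteDimensional ℝ 𝔤]
    [LieRing 𝔤]
    {H : Type*} [Group H] (Ad : H →* 𝔤 ≃ₗᵢ[ℝ] 𝔤)
    (𝔥 : Submodule ℝ 𝔤)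
    (hinner_inv : ∀ Z U V : 𝔤, ⟪⁅Z, U⁆, V⟫_ℝ + ⟪U, ⁅Z, V⁆⟫_ℝ = 0)
    {s : ℕ} (mm : Fin s → Submodule ℝ 𝔤)
    (hle : ∀ i, mm i ≤ 𝔥ᗮ)
    (hmm_inv : ∀ (i : Fin s) (h : H), ∀ x ∈ mm i, Ad h x ∈ mm i)
    -- the fixed family of maps `T_p^q : 𝔪_p → 𝔪_q`
    (T : ∀ p q : Fin s, ↥(mm p) →ₗ[ℝ] ↥(mm q))
    (hT0 : ∀ p q : Fin s, ¬ ReprEquiv Ad (mm p) (mm q) → T p q = 0)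
    (hTequiv : ∀ p q : Fin s, ReprEquiv Ad (mm p) (mm q) →
      (∀ (h : H) (x : 𝔤) (hx : x ∈ mm p) (hx' : Ad h x ∈ mm p),
          (T p q ⟨Ad h x, hx'⟩ : 𝔤) = Ad h (T p q ⟨x, hx⟩ : 𝔤)) ∧
        (∀ x y : ↥(mm p), ⟪(T p q x : 𝔤), (T p q y : 𝔤)⟫_ℝ = ⟪(x : 𝔤), (y : 𝔤)⟫_ℝ) ∧
        (∀ x : ↥(mm p), T q p (T p q x) = x) ∧ (∀ y : ↥(mm q), T p q (T q p y) = y))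
    (X : 𝔤) (hX : X ∈ 𝔥ᗮ)
    -- `X` is an equigeodesic vector: `[X, AX]_𝔪 = 0` for every metric operator `A`
    (hequi : ∀ A : ↥𝔥ᗮ →ₗ[ℝ] ↥𝔥ᗮ,
      ((∀ Z : ↥𝔥ᗮ, Z ≠ 0 → 0 < ⟪(A Z : 𝔤), (Z : 𝔤)⟫_ℝ) ∧
        (∀ Z W : ↥𝔥ᗮ, ⟪(A Z : 𝔤), (W : 𝔤)⟫_ℝ = ⟪(Z : 𝔤), (A W : 𝔤)⟫_ℝ) ∧
        (∀ (h : H) (Z : ↥𝔥ᗮ) (hZ : Ad h (Z : 𝔤) ∈ 𝔥ᗮ),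
          (A ⟨Ad h (Z : 𝔤), hZ⟩ : 𝔤) = Ad h (A Z : 𝔤))) →
      ((Submodule.orthogonalProjectionOnto 𝔥ᗮ ⁅X, (A ⟨X, hX⟩ : 𝔤)⁆ : ↥𝔥ᗮ) : 𝔤) = 0) :
    ∀ i j : Fin s,
      ((Submodule.orthogonalProjectionOnto 𝔥ᗮ
          ⁅X, ((T i j (Submodule.orthogonalProjectionOnto (mm i) X) : ↥(mm j)) : 𝔤)
              + ((T j i (Submodule.orthogonalProjectionOnto (mm j) X) : ↥(mm i)) : 𝔤)⁆ : ↥𝔥ᗮ) : 𝔤) = 0 := by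
  intro i j
  have hXeq : IsEquigeodesic Ad 𝔥ᗮ ⟨X, hX⟩ := hequi
  obtain ⟨hTij, hTji, hadj⟩ : Intertwines Ad (T i j) ∧ Intertwines Ad (T j i) ∧
      ∀ x y, ⟪T i j x, y⟫_ℝ = ⟪x, T j i y⟫_ℝ := by
    by_cases hij : ReprEquiv Ad (mm i) (mm j)
    · obtain ⟨hTAd, hTiso, hTji_ij, hTij_ji⟩ := hTequiv i j hij
      have hTij : Intertwines Ad (T i j) := fun h x hx => hTAd h x x.2 hx
      refine ⟨hTij, hTij.of_inverse (hmm_inv i) hTji_ij hTij_ji, fun x y => ?_⟩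
      conv_lhs => rw [← hTij_ji y]
      exact hTiso x (T j i y)
    · have hji : ¬ ReprEquiv Ad (mm j) (mm i) := fun hji => hij (hji.symm (hmm_inv j))
      rw [hT0 i j hij, hT0 j i hji]
      exact ⟨fun _ _ _ => by simp, fun _ _ _ => by simp, fun _ _ => by simp⟩
  exact hXeq.orthogonalProjectionOnto_lie_eq_zero hinner_inv
    (pairOperator_isSymmetric (hle i) (hle j) hadj)
    (pairOperator_intertwines (hle i) (hle j) (hmm_inv i) (hmm_inv j) hTij hTji)

/-- Compact-group setting: `𝔤` with `Ad(G)`-invariant inner product,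
`𝔪 = 𝔥ᗮ` with orthogonal decomposition `𝔪 = 𝔪₁ ⊕ ⋯ ⊕ 𝔪ₛ` into `Ad(H)`-invariant irreducible
subspaces, orthogonal projections `P_i` and intertwining maps `T_p^q` as in the paper.
If `X ∈ 𝔪` is an equigeodesic vector (`[X, AX]_𝔪 = 0` for every metric operator `A`), then
`[X, T_i^j(P_i(X)) + T_j^i(P_j(X))]_𝔪 = 0` for all `i, j`. -/
theorem statement_12
    {𝔤 : Type*} [NormedAddCommGroup 𝔤] [InnerProductSpace ℝ 𝔤] [FiniteDimensional ℝ 𝔤]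
    [LieRing 𝔤] [LieAlgebra ℝ 𝔤]
    {H : Type*} [Group H] (Ad : H →* 𝔤 ≃ₗᵢ[ℝ] 𝔤)
    (𝔥 : Submodule ℝ 𝔤)
    (hm_inv : ∀ (h : H), ∀ x ∈ 𝔥ᗮ, Ad h x ∈ 𝔥ᗮ)
    (hinner_inv : ∀ Z U V : 𝔤, ⟪⁅Z, U⁆, V⟫_ℝ + ⟪U, ⁅Z, V⁆⟫_ℝ = 0)
    {s : ℕ} (mm : Fin s → Submodule ℝ 𝔤)
    (hle : ∀ i, mm i ≤ 𝔥ᗮ)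
    (hsup : ⨆ i, mm i = 𝔥ᗮ)
    (horth : ∀ i j, i ≠ j → ∀ x ∈ mm i, ∀ y ∈ mm j, ⟪x, y⟫_ℝ = 0)
    (hmm_inv : ∀ (i : Fin s) (h : H), ∀ x ∈ mm i, Ad h x ∈ mm i)
    (hmm_irr : ∀ i : Fin s, (mm i ≠ ⊥ ∧
      ∀ W : Submodule ℝ 𝔤, W ≤ mm i → (∀ (h : H), ∀ x ∈ W, Ad h x ∈ W) → W = ⊥ ∨ W = mm i))
    -- the fixed family of maps `T_p^q : 𝔪_p → 𝔪_q`
    (T : ∀ p q : Fin s, ↥(mm p) →ₗ[ℝ] ↥(mm q))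
    (hTid : ∀ (p : Fin s) (x : ↥(mm p)), T p p x = x)
    (hT0 : ∀ p q : Fin s, ¬ ReprEquiv Ad (mm p) (mm q) → T p q = 0)
    (hTequiv : ∀ p q : Fin s, ReprEquiv Ad (mm p) (mm q) →
      (∀ (h : H) (x : 𝔤) (hx : x ∈ mm p) (hx' : Ad h x ∈ mm p),
          (T p q ⟨Ad h x, hx'⟩ : 𝔤) = Ad h (T p q ⟨x, hx⟩ : 𝔤)) ∧
        (∀ x y : ↥(mm p), ⟪(T p q x : 𝔤), (T p q y : 𝔤)⟫_ℝ = ⟪(x : 𝔤), (y : 𝔤)⟫_ℝ) ∧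
        (∀ x : ↥(mm p), T q p (T p q x) = x) ∧ (∀ y : ↥(mm q), T p q (T q p y) = y))
    (X : 𝔤) (hX : X ∈ 𝔥ᗮ)
    -- `X` is an equigeodesic vector: `[X, AX]_𝔪 = 0` for every metric operator `A`
    (hequi : ∀ A : ↥𝔥ᗮ →ₗ[ℝ] ↥𝔥ᗮ,
      ((∀ Z : ↥𝔥ᗮ, Z ≠ 0 → 0 < ⟪(A Z : 𝔤), (Z : 𝔤)⟫_ℝ) ∧
        (∀ Z W : ↥𝔥ᗮ, ⟪(A Z : 𝔤), (W : 𝔤)⟫_ℝ = ⟪(Z : 𝔤), (A W : 𝔤)⟫_ℝ) ∧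
        (∀ (h : H) (Z : ↥𝔥ᗮ) (hZ : Ad h (Z : 𝔤) ∈ 𝔥ᗮ),
          (A ⟨Ad h (Z : 𝔤), hZ⟩ : 𝔤) = Ad h (A Z : 𝔤))) →
      ((Submodule.orthogonalProjectionOnto 𝔥ᗮ ⁅X, (A ⟨X, hX⟩ : 𝔤)⁆ : ↥𝔥ᗮ) : 𝔤) = 0) :
    ∀ i j : Fin s,
      ((Submodule.orthogonalProjectionOnto 𝔥ᗮ
          ⁅X, ((T i j (Submodule.orthogonalProjectionOnto (mm i) X) : ↥(mm j)) : 𝔤)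
              + ((T j i (Submodule.orthogonalProjectionOnto (mm j) X) : ↥(mm i)) : 𝔤)⁆ : ↥𝔥ᗮ) : 𝔤) = 0 :=
  statement_12_general Ad 𝔥 hinner_inv mm hle hmm_inv T hT0 hTequiv X hX hequi
end
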